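/- arXiv:1707.01116 — 4 statements merged into one kernel-verified Lean document; each statement's English description precedes it below -/
import Mathlib

section
/- Let θ>0, γ>0, β>1 and let n be a natural number with 2n ≤ β. Then for every x>0 the function B̃_n(x) = x^{β+1} e^{γ/x} (dⁿ/dxⁿ)(x^{2n−β−1} e^{−γ/x}) satisfies the eigenfunction identity (θ/(β−1)) x² B̃_n''(x) − θ(x − γ/(β−1)) B̃_n'(x) = −λ_n B̃_n(x), where λ_n = θ n(β−n)/(β−1). -/
/-!
With `a = 2n - β - 1`, the function `g y = y ^ a * exp (-γ / y)` solves the first-order equation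
`y² g' = (a y + γ) g`. Differentiating it `n + 1` times by the Leibniz rule gives a second-order
equation for `h = g⁽ⁿ⁾`, namely `x² h'' + ((β + 3) x - γ) h' + (n + 1)(β + 1 - n) h = 0`.
Writing `B̃ₙ = w h` with `w x = x ^ (β + 1) * exp (γ / x)` and `w' = ((β + 1) x - γ) / x² · w`,
this equation for `h` is exactly `x² B̃ₙ'' - ((β - 1) x - γ) B̃ₙ' = -n (β - n) B̃ₙ`, which is the
eigenvalue equation of the generator after multiplication by `θ / (β - 1)`.
-/

open Set Filter Real
open scoped ContDiff

section Calculus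

variable {𝕜 F : Type*} [NontriviallyNormedField 𝕜] [NormedAddCommGroup F] [NormedSpace 𝕜 F]

theorem ContDiffOn.hasDerivAt_iteratedDeriv {f : 𝕜 → F} {s : Set 𝕜} (hf : ContDiffOn 𝕜 ∞ f s)
    (hs : IsOpen s) (k : ℕ) {x : 𝕜} (hx : x ∈ s) :
    HasDerivAt (iteratedDeriv k f) (iteratedDeriv (k + 1) f x) x := by
  have hk : ContDiffOn 𝕜 ∞ (iteratedDeriv k f) s := by
    induction k with
    | zero => simpa using hf
    | succ k ih =>
      rw [iteratedDeriv_succ]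
      exact ((contDiffOn_infty_iff_deriv_of_isOpen hs).1 ih).2
  rw [iteratedDeriv_succ]
  exact ((hk.differentiableOn (by simp)).differentiableAt (hs.mem_nhds hx)).hasDerivAt

theorem Set.EqOn.eq_of_hasDerivAt {f g : 𝕜 → F} {s : Set 𝕜} {x : 𝕜} {f' g' : F}
    (hfg : s.EqOn f g) (hs : IsOpen s) (hx : x ∈ s) (hf : HasDerivAt f f' x)
    (hg : HasDerivAt g g' x) : f' = g' := by
  rw [← hf.deriv, ← hg.deriv]
  exact hfg.deriv hs hx

theorem deriv_deriv_mul {f g f' g' : 𝕜 → 𝕜} {s : Set 𝕜} (hs : IsOpen s) {x f'' g'' : 𝕜}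
    (hx : x ∈ s) (hf : ∀ y ∈ s, HasDerivAt f (f' y) y) (hg : ∀ y ∈ s, HasDerivAt g (g' y) y)
    (hf' : HasDerivAt f' f'' x) (hg' : HasDerivAt g' g'' x) :
    deriv (deriv fun y ↦ f y * g y) x = f'' * g x + 2 * (f' x * g' x) + f x * g'' := by
  have hfg : deriv (fun y ↦ f y * g y) =ᶠ[nhds x] fun y ↦ f' y * g y + f y * g' y :=
    eventually_of_mem (hs.mem_nhds hx) fun y hy ↦ ((hf y hy).mul (hg y hy)).deriv
  rw [hfg.deriv_eq, ((hf'.fun_mul (hg x hx)).fun_add ((hf x hx).fun_mul hg')).deriv]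
  ring

end Calculus

theorem sq_mul_iteratedDeriv_add_two {g : ℝ → ℝ} {s : Set ℝ} (hg : ContDiffOn ℝ ∞ g s)
    (hs : IsOpen s) {a b : ℝ} (hode : s.EqOn (fun x ↦ x ^ 2 * deriv g x) (fun x ↦ (a * x - b) * g x))
    (k : ℕ) : s.EqOn
      (fun x ↦ x ^ 2 * iteratedDeriv (k + 2) g x + 2 * (k + 1) * x * iteratedDeriv (k + 1) g x
        + (k + 1) * k * iteratedDeriv k g x)
      (fun x ↦ (a * x - b) * iteratedDeriv (k + 1) g x + (k + 1) * a * iteratedDeriv k g x) := by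
  have hd (j : ℕ) {x : ℝ} (hx : x ∈ s) := hg.hasDerivAt_iteratedDeriv hs j hx
  induction k with
  | zero =>
    intro x hx
    rw [← iteratedDeriv_one] at hode
    have hode' := hode.eq_of_hasDerivAt hs hx ((hasDerivAt_pow 2 x).mul (hd 1 hx))
      ((((hasDerivAt_id' x).const_mul a).sub_const b).mul (hd 0 hx))
    push_cast [iteratedDeriv_zero] at hode' ⊢
    linear_combination hode'
  | succ k ih =>
    intro x hx
    have ih' := ih.eq_of_hasDerivAt hs hx
      ((((hasDerivAt_pow 2 x).mul (hd (k + 2) hx)).add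
        (((hasDerivAt_id' x).const_mul (2 * ((k : ℝ) + 1))).mul (hd (k + 1) hx))).add
        ((hd k hx).const_mul (((k : ℝ) + 1) * k)))
      (((((hasDerivAt_id' x).const_mul a).sub_const b).mul (hd (k + 1) hx)).add
        ((hd k hx).const_mul (((k : ℝ) + 1) * a)))
    push_cast at ih' ⊢
    linear_combination ih'

theorem hasDerivAt_rpow_mul_exp_div (a c : ℝ) {x : ℝ} (hx : 0 < x) :
    HasDerivAt (fun y ↦ y ^ a * exp (c / y)) ((a * x - c) / x ^ 2 * (x ^ a * exp (c / x))) x := by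
  have hpow := hasDerivAt_rpow_const (p := a) (Or.inl hx.ne')
  have hexp := ((hasDerivAt_const x c).fun_div (hasDerivAt_id' x) hx.ne').exp
  refine (hpow.mul hexp).congr_deriv ?_
  rw [rpow_sub_one hx.ne']
  field_simp
  ring

theorem contDiffOn_rpow_mul_exp_div (a c : ℝ) :
    ContDiffOn ℝ ∞ (fun y ↦ y ^ a * exp (c / y)) (Ioi 0) := fun _ hx ↦
  ((contDiffAt_rpow_const_of_ne (ne_of_gt hx)).mul
    (contDiffAt_const.div contDiffAt_id (ne_of_gt hx)).exp).contDiffWithinAt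

theorem sq_mul_deriv_rpow_mul_exp_div (a c : ℝ) :
    (Ioi 0).EqOn (fun x ↦ x ^ 2 * deriv (fun y ↦ y ^ a * exp (c / y)) x)
      (fun x ↦ (a * x - c) * (x ^ a * exp (c / x))) := fun x hx ↦ by
  simp only [(hasDerivAt_rpow_mul_exp_div a c hx).deriv]
  field_simp [(mem_Ioi.1 hx).ne']

theorem sq_mul_deriv_deriv_rpow_mul_exp_div_mul {β γ m : ℝ} {h h' : ℝ → ℝ} {x h'' : ℝ}
    (hx : 0 < x) (hh : ∀ y ∈ Ioi 0, HasDerivAt h (h' y) y) (hh' : HasDerivAt h' h'' x)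
    (hode : x ^ 2 * h'' + ((β + 3) * x - γ) * h' x + (m + 1) * (β + 1 - m) * h x = 0) :
    x ^ 2 * deriv (deriv fun y ↦ y ^ (β + 1) * exp (γ / y) * h y) x
        - ((β - 1) * x - γ) * deriv (fun y ↦ y ^ (β + 1) * exp (γ / y) * h y) x
      = -(m * (β - m)) * (x ^ (β + 1) * exp (γ / x) * h x) := by
  set w : ℝ → ℝ := fun y ↦ y ^ (β + 1) * exp (γ / y)
  set u : ℝ → ℝ := fun y ↦ ((β + 1) * y - γ) / y ^ 2
  have hw (y : ℝ) (hy : y ∈ Ioi 0) : HasDerivAt w (u y * w y) y :=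
    hasDerivAt_rpow_mul_exp_div (β + 1) γ hy
  have hu := (((hasDerivAt_id' x).const_mul (β + 1)).sub_const γ).fun_div (hasDerivAt_pow 2 x)
    (pow_ne_zero 2 hx.ne')
  rw [deriv_deriv_mul isOpen_Ioi hx hw hh (hu.fun_mul (hw x hx)) hh',
    ((hw x hx).fun_mul (hh x hx)).deriv,
    show x ^ (β + 1) * exp (γ / x) * h x = w x * h x from rfl]
  simp only [u]
  field_simp
  linear_combination x ^ 2 * w x * hode

theorem rg_bessel_eigenfunction_general (θ γ β : ℝ) (n : ℕ)
    (hβ : 1 < β)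
    (B : ℝ → ℝ)
    (hB : B = fun x : ℝ => x ^ (β + 1) * Real.exp (γ / x) *
      iteratedDeriv n (fun y : ℝ => y ^ (2 * (n : ℝ) - β - 1) * Real.exp (-γ / y)) x) :
    ∀ x : ℝ, 0 < x →
      (θ / (β - 1)) * x ^ 2 * deriv (deriv B) x - θ * (x - γ / (β - 1)) * deriv B x
        = -(θ * n * (β - n) / (β - 1)) * B x := by
  intro x hx
  have hg := contDiffOn_rpow_mul_exp_div (2 * (n : ℝ) - β - 1) (-γ)
  have hd (j : ℕ) {y : ℝ} (hy : y ∈ Ioi 0) := hg.hasDerivAt_iteratedDeriv isOpen_Ioi j hy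
  have hode := sq_mul_iteratedDeriv_add_two hg isOpen_Ioi
    (sq_mul_deriv_rpow_mul_exp_div _ _) n hx
  simp only at hode
  have hB_eigen := sq_mul_deriv_deriv_rpow_mul_exp_div_mul (β := β) (γ := γ) (m := n) hx
    (fun y hy ↦ hd n hy) (hd (n + 1) hx) (by linear_combination hode)
  have hdrift : θ * (x - γ / (β - 1)) = θ / (β - 1) * ((β - 1) * x - γ) := by
    field_simp [(sub_pos.2 hβ).ne']
  subst hB
  rw [hdrift]
  linear_combination θ / (β - 1) * hB_eigen

/-- The Bessel function `B̃_n` given by the Rodrigues formula is an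
eigenfunction of the generator of the reciprocal gamma diffusion with eigenvalue
`λ_n = θ n (β - n) / (β - 1)`. -/
theorem rg_bessel_eigenfunction (θ γ β : ℝ) (n : ℕ)
    (hθ : 0 < θ) (hγ : 0 < γ) (hβ : 1 < β) (hn : (2 * n : ℝ) ≤ β)
    (B : ℝ → ℝ)
    (hB : B = fun x : ℝ => x ^ (β + 1) * Real.exp (γ / x) *
      iteratedDeriv n (fun y : ℝ => y ^ (2 * (n : ℝ) - β - 1) * Real.exp (-γ / y)) x) :
    ∀ x : ℝ, 0 < x →
      (θ / (β - 1)) * x ^ 2 * deriv (deriv B) x - θ * (x - γ / (β - 1)) * deriv B x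
        = -(θ * n * (β - n) / (β - 1)) * B x :=
  rg_bessel_eigenfunction_general θ γ β n hβ B hB
end

section
/- Let γ>0, β>1 and let n be a natural number with 2n ≤ β. Then the function B̃_n(x) = x^{β+1} e^{γ/x} (dⁿ/dxⁿ)(x^{2n−β−1} e^{−γ/x}) coincides on (0,∞) with a polynomial of degree exactly n. -/
/-!
On `(0, ∞)`, differentiating `x ^ b * exp (-γ / x) * p x` gives
`x ^ (b - 2) * exp (-γ / x) * q x` with `q = (b X + γ) p + X² p'`. Starting from
`x ^ a * exp (-γ / x)`, the `k`-th derivative is therefore `x ^ (a - 2k) * exp (-γ / x) * P_k x`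
for a polynomial `P_k` of degree at most `k` whose `X ^ k` coefficient is the falling factorial
`a (a - 1) ⋯ (a - k + 1)`. For `a = 2n - β - 1` the prefactor `x ^ (β + 1) * exp (γ / x)` cancels
`x ^ (a - 2n) * exp (-γ / x)`, and `2n ≤ β` makes `a < 0`, so the falling factorial does not vanish.
-/

open Polynomial

lemma descPochhammer_eval_ne_zero_of_neg {S : Type*} [Ring S] [PartialOrder S]
    [IsStrictOrderedRing S] {s : S} (hs : s < 0) (k : ℕ) : (descPochhammer S k).eval s ≠ 0 := by
  intro h
  have := ascPochhammer_pos k (-s) (neg_pos.mpr hs)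
  rw [ascPochhammer_eval_neg_eq_descPochhammer, h, mul_zero] at this
  exact this.false

namespace BesselRodrigues

section CommRing

variable {R : Type*} [CommRing R]

noncomputable def rodriguesPoly (a γ : R) : ℕ → R[X]
  | 0 => 1
  | k + 1 => (C (a - 2 * k) * X + C γ) * rodriguesPoly a γ k +
      X ^ 2 * derivative (rodriguesPoly a γ k)

variable (a γ : R)

@[simp]
lemma rodriguesPoly_zero : rodriguesPoly a γ 0 = 1 := rfl

lemma rodriguesPoly_succ (k : ℕ) :
    rodriguesPoly a γ (k + 1) = (C (a - 2 * k) * X + C γ) * rodriguesPoly a γ k +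
      X ^ 2 * derivative (rodriguesPoly a γ k) := rfl

lemma natDegree_rodriguesPoly_le (k : ℕ) : (rodriguesPoly a γ k).natDegree ≤ k := by
  induction k with
  | zero => simp
  | succ k ih =>
    rw [rodriguesPoly_succ]
    refine (natDegree_add_le _ _).trans (max_le ?_ ?_)
    · refine natDegree_mul_le.trans ?_
      have : (C (a - 2 * k) * X + C γ).natDegree ≤ 1 := by compute_degree
      omega
    · rcases eq_or_ne (rodriguesPoly a γ k).natDegree 0 with h0 | h0
      · simp [derivative_of_natDegree_zero h0]
      · refine natDegree_mul_le.trans ?_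
        have := natDegree_derivative_lt h0
        have := natDegree_X_pow_le (R := R) 2
        omega

lemma coeff_rodriguesPoly_self (k : ℕ) :
    (rodriguesPoly a γ k).coeff k = (descPochhammer R k).eval a := by
  induction k with
  | zero => simp
  | succ k ih =>
    have hk : (rodriguesPoly a γ k).coeff (k + 1) = 0 :=
      coeff_eq_zero_of_natDegree_lt ((natDegree_rodriguesPoly_le a γ k).trans_lt k.lt_succ_self)
    have hX2 : (X ^ 2 * derivative (rodriguesPoly a γ k)).coeff (k + 1) =
        k * (rodriguesPoly a γ k).coeff k := by
      rw [coeff_X_pow_mul']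
      rcases k with _ | k
      · simp
      · rw [if_pos (by omega), show k + 1 + 1 - 2 = k by omega, coeff_derivative]
        push_cast
        ring
    rw [rodriguesPoly_succ, coeff_add, add_mul, coeff_add, mul_assoc, coeff_C_mul, coeff_X_mul,
      coeff_C_mul, hk, hX2, ih, descPochhammer_succ_eval]
    ring

lemma degree_rodriguesPoly {k : ℕ} (h : (descPochhammer R k).eval a ≠ 0) :
    (rodriguesPoly a γ k).degree = k :=
  degree_eq_of_le_of_coeff_ne_zero (degree_le_of_natDegree_le (natDegree_rodriguesPoly_le a γ k))
    (by rwa [coeff_rodriguesPoly_self])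

end CommRing

open Real

lemma hasDerivAt_rpow_mul_exp_mul_eval {b γ x : ℝ} (hx : 0 < x) (p : ℝ[X]) :
    HasDerivAt (fun y ↦ y ^ b * exp (-γ / y) * p.eval y)
      (x ^ (b - 2) * exp (-γ / x) * ((C b * X + C γ) * p + X ^ 2 * derivative p).eval x) x := by
  have hpow : HasDerivAt (fun y ↦ y ^ b) (b * x ^ (b - 1)) x := hasDerivAt_rpow_const (.inl hx.ne')
  have hexp : HasDerivAt (fun y ↦ exp (-γ / y)) (exp (-γ / x) * (γ / x ^ 2)) x := by
    refine HasDerivAt.exp ?_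
    simp only [div_eq_mul_inv]
    exact ((hasDerivAt_inv hx.ne').const_mul (-γ)).congr_deriv (by ring)
  refine ((hpow.mul hexp).mul (p.hasDerivAt x)).congr_deriv ?_
  have h1 : x ^ (b - 1) = x ^ (b - 2) * x := by
    rw [← rpow_add_one hx.ne']; ring_nf
  have h2 : x ^ b = x ^ (b - 2) * x ^ 2 := by
    rw [← rpow_natCast, ← rpow_add hx]; ring_nf
  simp only [Pi.mul_apply, eval_add, eval_mul, eval_C, eval_X, eval_pow]
  rw [h1, h2]
  field_simp

lemma iteratedDeriv_rpow_mul_exp (a γ : ℝ) (k : ℕ) {x : ℝ} (hx : 0 < x) :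
    iteratedDeriv k (fun y ↦ y ^ a * exp (-γ / y)) x =
      x ^ (a - 2 * k) * exp (-γ / x) * (rodriguesPoly a γ k).eval x := by
  induction k generalizing x with
  | zero => simp
  | succ k ih =>
    have hev : iteratedDeriv k (fun y ↦ y ^ a * exp (-γ / y)) =ᶠ[nhds x]
        fun y ↦ y ^ (a - 2 * k) * exp (-γ / y) * (rodriguesPoly a γ k).eval y :=
      Filter.eventually_of_mem (Ioi_mem_nhds hx) fun y hy ↦ ih hy
    rw [iteratedDeriv_succ, hev.deriv_eq, (hasDerivAt_rpow_mul_exp_mul_eval hx _).deriv,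
      rodriguesPoly_succ, show a - 2 * ((k + 1 : ℕ) : ℝ) = a - 2 * k - 2 by push_cast; ring]

end BesselRodrigues

open BesselRodrigues Real in
theorem rg_bessel_is_polynomial_general (γ β : ℝ) (n : ℕ)
    (hn : (2 * n : ℝ) ≤ β)
    (B : ℝ → ℝ)
    (hB : B = fun x : ℝ => x ^ (β + 1) * Real.exp (γ / x) *
      iteratedDeriv n (fun y : ℝ => y ^ (2 * (n : ℝ) - β - 1) * Real.exp (-γ / y)) x) :
    ∃ p : Polynomial ℝ, p.degree = n ∧ ∀ x : ℝ, 0 < x → B x = p.eval x := by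
  set a := 2 * (n : ℝ) - β - 1
  have ha : a < 0 := by linarith
  refine ⟨rodriguesPoly a γ n,
    degree_rodriguesPoly a γ (descPochhammer_eval_ne_zero_of_neg ha n), fun x hx ↦ ?_⟩
  have hpow : x ^ (β + 1) * x ^ (a - 2 * n) = 1 := by
    rw [← rpow_add hx, show β + 1 + (a - 2 * n) = 0 by ring, rpow_zero]
  have hexp : exp (γ / x) * exp (-γ / x) = 1 := by
    rw [← exp_add, neg_div, add_neg_cancel, exp_zero]
  subst hB
  beta_reduce
  rw [iteratedDeriv_rpow_mul_exp a γ n hx]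
  linear_combination (exp (γ / x) * exp (-γ / x) * (rodriguesPoly a γ n).eval x) * hpow +
    (rodriguesPoly a γ n).eval x * hexp

/-- The Bessel function `B̃_n` given by the Rodrigues formula coincides
on `(0, ∞)` with a polynomial of degree exactly `n`. -/
theorem rg_bessel_is_polynomial (γ β : ℝ) (n : ℕ)
    (hγ : 0 < γ) (hβ : 1 < β) (hn : (2 * n : ℝ) ≤ β)
    (B : ℝ → ℝ)
    (hB : B = fun x : ℝ => x ^ (β + 1) * Real.exp (γ / x) *
      iteratedDeriv n (fun y : ℝ => y ^ (2 * (n : ℝ) - β - 1) * Real.exp (-γ / y)) x) :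
    ∃ p : Polynomial ℝ, p.degree = n ∧ ∀ x : ℝ, 0 < x → B x = p.eval x :=
  rg_bessel_is_polynomial_general γ β n hn B hB
end

section
/- Let γ>0, β>2 and let n be a natural number with 4n ≤ β. Then the function F̃_n(x) = x^{1−γ/2}(γx+β)^{(γ+β)/2} (dⁿ/dxⁿ)[2ⁿ x^{γ/2+n−1}(γx+β)^{n−(γ+β)/2}] coincides on (0,∞) with a polynomial of degree exactly n. -/
/-!
Write `L = γx + β`. Differentiating `x ^ a * L ^ b * P(x)` gives `x ^ (a-1) * L ^ (b-1) * Q(x)`,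
where `Q = a L P + γ b X P + X L P'` raises the degree by at most one and has leading coefficient
`γ (a + b + deg P)` times that of `P`. Hence the `n`-th derivative of `x ^ a * L ^ b` is
`x ^ (a-n) * L ^ (b-n)` times a polynomial of degree `≤ n` with `n`-th coefficient
`∏_{k<n} γ (a + b - k)`. In the Rodrigues formula the prefactor cancels the two powers exactly, and
`a + b = 2n - 1 - β/2 < 0` keeps the leading coefficient nonzero.
-/

open Polynomial Set

section

variable {R : Type*} [CommSemiring R]

theorem coeff_X_mul_derivative (p : R[X]) (m : ℕ) :
    (X * derivative p).coeff m = m * p.coeff m := by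
  cases m with
  | zero => simp [mul_coeff_zero]
  | succ k =>
    rw [coeff_X_mul, coeff_derivative]
    push_cast
    ring

end

noncomputable section

def rodriguesStep (γ β a b : ℝ) (P : ℝ[X]) : ℝ[X] :=
  C a * (C γ * X + C β) * P + C (γ * b) * X * P + X * (C γ * X + C β) * derivative P

def rodriguesPoly (γ β a b : ℝ) : ℕ → ℝ[X]
  | 0 => 1
  | m + 1 => rodriguesStep γ β (a - m) (b - m) (rodriguesPoly γ β a b m)

end

section

variable {γ β a b : ℝ}

theorem coeff_rodriguesStep_succ (P : ℝ[X]) (i : ℕ) :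
    (rodriguesStep γ β a b P).coeff (i + 1) =
      γ * (a + b + i) * P.coeff i + β * (a + i + 1) * P.coeff (i + 1) := by
  have hstep : rodriguesStep γ β a b P = C (γ * (a + b)) * (X * P) + C (a * β) * P
      + C γ * (X * (X * derivative P)) + C β * (X * derivative P) := by
    simp only [rodriguesStep, map_mul, map_add]
    ring
  rw [hstep, coeff_add, coeff_add, coeff_add, coeff_C_mul, coeff_C_mul, coeff_C_mul, coeff_C_mul,
    coeff_X_mul, coeff_X_mul, coeff_X_mul_derivative, coeff_X_mul_derivative]
  push_cast
  ring

theorem natDegree_rodriguesStep_le {P : ℝ[X]} {d : ℕ} (hP : P.natDegree ≤ d) :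
    (rodriguesStep γ β a b P).natDegree ≤ d + 1 := by
  refine natDegree_le_iff_coeff_eq_zero.mpr fun N hN => ?_
  obtain ⟨i, rfl⟩ : ∃ i, N = i + 1 := ⟨N - 1, by omega⟩
  rw [coeff_rodriguesStep_succ, coeff_eq_zero_of_natDegree_lt (by omega),
    coeff_eq_zero_of_natDegree_lt (by omega)]
  ring

theorem coeff_rodriguesStep_of_natDegree_le {P : ℝ[X]} {d : ℕ} (hP : P.natDegree ≤ d) :
    (rodriguesStep γ β a b P).coeff (d + 1) = γ * (a + b + d) * P.coeff d := by
  rw [coeff_rodriguesStep_succ, coeff_eq_zero_of_natDegree_lt (n := d + 1) (by omega)]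
  ring

theorem natDegree_rodriguesPoly_le (m : ℕ) : (rodriguesPoly γ β a b m).natDegree ≤ m := by
  induction m with
  | zero => simp [rodriguesPoly]
  | succ k ih => exact natDegree_rodriguesStep_le ih

theorem coeff_rodriguesPoly_self (m : ℕ) :
    (rodriguesPoly γ β a b m).coeff m = ∏ k ∈ Finset.range m, γ * (a + b - k) := by
  induction m with
  | zero => simp [rodriguesPoly]
  | succ k ih =>
    rw [rodriguesPoly, coeff_rodriguesStep_of_natDegree_le (natDegree_rodriguesPoly_le k), ih,
      Finset.prod_range_succ]
    ring

theorem degree_rodriguesPoly {m : ℕ} (hγ : γ ≠ 0) (hab : ∀ k < m, a + b ≠ k) :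
    (rodriguesPoly γ β a b m).degree = m := by
  refine degree_eq_of_le_of_coeff_ne_zero
    (natDegree_le_iff_degree_le.mp (natDegree_rodriguesPoly_le m)) ?_
  rw [coeff_rodriguesPoly_self, Finset.prod_ne_zero_iff]
  intro k hk
  exact mul_ne_zero hγ (sub_ne_zero.mpr (hab k (Finset.mem_range.mp hk)))

theorem hasDerivAt_rpow_mul_rpow_mul_eval (P : ℝ[X]) {x : ℝ} (hx : x ≠ 0)
    (hL : γ * x + β ≠ 0) :
    HasDerivAt (fun y => y ^ a * (γ * y + β) ^ b * P.eval y)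
      (x ^ (a - 1) * (γ * x + β) ^ (b - 1) * (rodriguesStep γ β a b P).eval x) x := by
  have hlin : HasDerivAt (fun y : ℝ => γ * y + β) γ x := by
    simpa using ((hasDerivAt_id x).const_mul γ).add_const β
  have hdx : HasDerivAt (fun y : ℝ => y ^ a) (a * x ^ (a - 1)) x :=
    Real.hasDerivAt_rpow_const (Or.inl hx)
  have hdL : HasDerivAt (fun y : ℝ => (γ * y + β) ^ b) (γ * b * (γ * x + β) ^ (b - 1)) x :=
    hlin.rpow_const (Or.inl hL)
  refine ((hdx.mul hdL).mul (P.hasDerivAt x)).congr_deriv ?_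
  have hxa : x ^ a = x ^ (a - 1) * x := by rw [Real.rpow_sub_one hx]; field_simp
  have hLb : (γ * x + β) ^ b = (γ * x + β) ^ (b - 1) * (γ * x + β) := by
    rw [Real.rpow_sub_one hL]; field_simp
  simp only [rodriguesStep, eval_add, eval_mul, eval_C, eval_X, Pi.mul_apply]
  rw [hxa, hLb]
  ring

theorem iteratedDeriv_rpow_mul_rpow_eqOn (hγ : 0 < γ) (hβ : 0 ≤ β) (m : ℕ) :
    EqOn (iteratedDeriv m fun y => y ^ a * (γ * y + β) ^ b)
      (fun x => x ^ (a - m) * (γ * x + β) ^ (b - m) * (rodriguesPoly γ β a b m).eval x)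
      (Ioi 0) := by
  induction m with
  | zero => intro x _; simp [rodriguesPoly]
  | succ k ih =>
    intro x (hx : 0 < x)
    have hL : 0 < γ * x + β := by positivity
    rw [iteratedDeriv_succ, (ih.eventuallyEq_of_mem (Ioi_mem_nhds hx)).deriv_eq,
      (hasDerivAt_rpow_mul_rpow_mul_eval _ hx.ne' hL.ne').deriv]
    simp only [rodriguesPoly, Nat.cast_succ, sub_sub]

end

theorem fs_function_is_polynomial_general (γ β : ℝ) (n : ℕ)
    (hγ : 0 < γ) (hn : (4 * n : ℝ) ≤ β)
    (F : ℝ → ℝ)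
    (hF : F = fun x : ℝ => x ^ (1 - γ / 2) * (γ * x + β) ^ (γ / 2 + β / 2) *
      iteratedDeriv n
        (fun y : ℝ => 2 ^ n * y ^ (γ / 2 + (n : ℝ) - 1) *
          (γ * y + β) ^ ((n : ℝ) - γ / 2 - β / 2)) x) :
    ∃ p : Polynomial ℝ, p.degree = n ∧ ∀ x : ℝ, 0 < x → F x = p.eval x := by
  have hβ : 0 ≤ β := (by positivity : (0 : ℝ) ≤ 4 * n).trans hn
  set P := rodriguesPoly γ β (γ / 2 + n - 1) (n - γ / 2 - β / 2) n
  refine ⟨C (2 ^ n) * P, ?_, fun x hx => ?_⟩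
  · rw [degree_C_mul (by positivity)]
    exact degree_rodriguesPoly hγ.ne' fun k _ => by linarith [(k.cast_nonneg : (0 : ℝ) ≤ k)]
  · have hL : 0 < γ * x + β := by positivity
    simp_rw [hF, mul_assoc (2 ^ n : ℝ), iteratedDeriv_const_mul_field,
      iteratedDeriv_rpow_mul_rpow_eqOn hγ hβ n hx, eval_mul, eval_C]
    have hxpow : x ^ (1 - γ / 2) * x ^ (γ / 2 + n - 1 - n) = 1 := by
      rw [← Real.rpow_add hx]; ring_nf; exact Real.rpow_zero x
    have hLpow : (γ * x + β) ^ (γ / 2 + β / 2) * (γ * x + β) ^ (n - γ / 2 - β / 2 - n) = 1 := by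
      rw [← Real.rpow_add hL]; ring_nf; exact Real.rpow_zero _
    linear_combination (2 ^ n * eval x P) *
      ((x ^ (1 - γ / 2) * x ^ (γ / 2 + n - 1 - n)) * hLpow + hxpow)

/-- The Fisher–Snedecor function `F̃_n` given by the Rodrigues formula
coincides on `(0, ∞)` with a polynomial of degree exactly `n`. -/
theorem fs_function_is_polynomial (γ β : ℝ) (n : ℕ)
    (hγ : 0 < γ) (hβ : 2 < β) (hn : (4 * n : ℝ) ≤ β)
    (F : ℝ → ℝ)
    (hF : F = fun x : ℝ => x ^ (1 - γ / 2) * (γ * x + β) ^ (γ / 2 + β / 2) *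
      iteratedDeriv n
        (fun y : ℝ => 2 ^ n * y ^ (γ / 2 + (n : ℝ) - 1) *
          (γ * y + β) ^ ((n : ℝ) - γ / 2 - β / 2)) x) :
    ∃ p : Polynomial ℝ, p.degree = n ∧ ∀ x : ℝ, 0 < x → F x = p.eval x :=
  fs_function_is_polynomial_general γ β n hγ hn F hF
end

section
/- Let θ>0, γ>0, β>2 and λ > Λ := θβ²/(8(β−2)). Then the function f(x) = f_1(x,−λ) defined by the Gauss hypergeometric series is twice differentiable on (0, β/γ) and satisfies the Sturm–Liouville equation (2θ/(γ(β−2))) x(γx+β) f''(x) − θ(x − β/(β−2)) f'(x) = −λ f(x) for all x ∈ (0, β/γ). -/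
/-!
Write `f x = ∑ aₙ xⁿ`. The ratio `aₙ₊₁ / aₙ` tends to `-γ / β`, so the radius of convergence
is at least `β / γ` and the series may be differentiated termwise twice on `(-β/γ, β/γ)`.
Substituting the series into the equation, the coefficient of `xⁿ` becomes
`(2θ/(β-2) n(n-1) - θ n + λ) aₙ + (2θβ/(γ(β-2)) n + θβ/(β-2)) (n+1) aₙ₊₁`,
which vanishes by the two-term recurrence of the hypergeometric coefficients precisely because
`k² = λ(β-2)/(2θ) - β²/16`.
-/

open Filter Topology

noncomputable def powerSum (a : ℕ → ℝ) (x : ℝ) : ℝ := ∑' n, a n * x ^ n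

def derivCoeff (a : ℕ → ℝ) (n : ℕ) : ℝ := (n + 1) * a (n + 1)

def LeRadius (a : ℕ → ℝ) (R : ℝ) : Prop :=
  ∀ r, 0 < r → r < R → Summable fun n => |a n| * r ^ n

section PowerSeries

variable {a : ℕ → ℝ} {R x : ℝ}

theorem LeRadius.summable (ha : LeRadius a R) (hx : |x| < R) : Summable fun n => a n * x ^ n := by
  obtain ⟨r, hxr, hrR⟩ := exists_between hx
  have hr : 0 < r := (abs_nonneg x).trans_lt hxr
  refine (ha r hr hrR).of_norm_bounded fun n => ?_
  rw [Real.norm_eq_abs, abs_mul, abs_pow]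
  gcongr

theorem leRadius_of_tendsto_ratio {q : ℕ → ℝ} {L : ℝ} (hrec : ∀ n, a (n + 1) = q n * a n)
    (hq : Tendsto q atTop (𝓝 L)) : LeRadius a |L|⁻¹ := by
  intro r hr hrL
  have hL : L ≠ 0 := by
    rintro rfl
    simp only [abs_zero, inv_zero] at hrL
    linarith
  have hLr : |L| * r < 1 := by
    have h := mul_lt_mul_of_pos_left hrL (abs_pos.mpr hL)
    rwa [mul_inv_cancel₀ (abs_pos.mpr hL).ne'] at h
  have hl : (|L| * r + 1) / 2 < 1 := by linarith
  refine summable_of_ratio_norm_eventually_le hl ?_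
  filter_upwards [(hq.abs.mul_const r).eventually_lt_const (u := (|L| * r + 1) / 2)
    (by linarith)] with n hn
  simp only [norm_mul, norm_pow, Real.norm_eq_abs, abs_abs, abs_of_pos hr, hrec, abs_mul]
  calc |q n| * |a n| * r ^ (n + 1) = (|q n| * r) * (|a n| * r ^ n) := by ring
    _ ≤ (|L| * r + 1) / 2 * (|a n| * r ^ n) := by gcongr

theorem leRadius_derivCoeff (ha : LeRadius a R) : LeRadius (derivCoeff a) R := by
  intro r hr hrR
  obtain ⟨r', hrr', hr'R⟩ := exists_between hrR
  have hr' : 0 < r' := hr.trans hrr'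
  have hshift : Summable fun n => |a (n + 1)| * r' ^ (n + 1) :=
    (summable_nat_add_iff 1).mpr (ha r' hr' hr'R)
  have hgeom : Tendsto (fun n : ℕ => ((n : ℝ) + 1) * (r / r') ^ n / r') atTop (𝓝 0) := by
    have hq : |r / r'| < 1 := by rw [abs_of_pos (by positivity), div_lt_one hr']; exact hrr'
    have h := ((tendsto_pow_const_mul_const_pow_of_abs_lt_one 1 hq).add
      (tendsto_pow_const_mul_const_pow_of_abs_lt_one 0 hq)).div_const r'
    simpa [add_mul] using h
  refine hshift.of_norm_bounded_eventually_nat ?_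
  filter_upwards [hgeom.eventually (ge_mem_nhds one_pos)] with n hn
  rw [Real.norm_eq_abs, abs_of_nonneg (by positivity), derivCoeff, abs_mul,
    abs_of_nonneg (by positivity : (0 : ℝ) ≤ n + 1)]
  calc (n + 1) * |a (n + 1)| * r ^ n
      = |a (n + 1)| * r' ^ (n + 1) * ((n + 1) * (r / r') ^ n / r') := by
        rw [div_pow, pow_succ]
        field_simp
    _ ≤ |a (n + 1)| * r' ^ (n + 1) * 1 := by gcongr
    _ = |a (n + 1)| * r' ^ (n + 1) := mul_one _

theorem hasDerivAt_powerSum (ha : LeRadius a R) (hx : |x| < R) :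
    HasDerivAt (powerSum a) (powerSum (derivCoeff a) x) x := by
  obtain ⟨r, hxr, hrR⟩ := exists_between hx
  have hr : 0 < r := (abs_nonneg x).trans_lt hxr
  have hxt : x ∈ Set.Ioo (-r) r := abs_lt.mp hxr
  have hterm (n : ℕ) (y : ℝ) :
      HasDerivAt (fun y => a (n + 1) * y ^ (n + 1)) (derivCoeff a n * y ^ n) y := by
    refine ((hasDerivAt_pow (n + 1) y).const_mul (a (n + 1))).congr_deriv ?_
    rw [derivCoeff, add_tsub_cancel_right]
    push_cast
    ring
  have htail : HasDerivAt (fun y => ∑' n, a (n + 1) * y ^ (n + 1))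
      (powerSum (derivCoeff a) x) x := by
    refine hasDerivAt_tsum_of_isPreconnected (leRadius_derivCoeff ha r hr hrR) isOpen_Ioo
      isPreconnected_Ioo (fun n y _ => hterm n y) (fun n y hy => ?_) (y₀ := 0)
      ⟨by linarith, hr⟩ (by simp) hxt
    rw [Real.norm_eq_abs, abs_mul, abs_pow]
    gcongr
    exact (abs_lt.mpr hy).le
  refine (htail.const_add (a 0)).congr_of_eventuallyEq ?_
  filter_upwards [isOpen_Ioo.mem_nhds hxt] with y hy
  have hyR : |y| < R := (abs_lt.mpr hy).trans hrR
  rw [powerSum, (ha.summable hyR).tsum_eq_zero_add, pow_zero, mul_one]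

theorem deriv_powerSum_eventuallyEq (ha : LeRadius a R) (hx : |x| < R) :
    deriv (powerSum a) =ᶠ[𝓝 x] powerSum (derivCoeff a) := by
  have hopen : IsOpen {y : ℝ | |y| < R} := isOpen_lt continuous_abs continuous_const
  filter_upwards [hopen.mem_nhds hx] with y hy
  exact (hasDerivAt_powerSum ha hy).deriv

theorem hasSum_mul_pow_of_hasSum_succ {b : ℕ → ℝ} {s : ℝ}
    (h : HasSum (fun n => b (n + 1) * x ^ n) s) :
    HasSum (fun n => b n * x ^ n) (b 0 + x * s) := by
  rw [← hasSum_nat_add_iff' 1, Finset.sum_range_one, pow_zero, mul_one, add_sub_cancel_left]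
  have hshift : (fun n => b (n + 1) * x ^ (n + 1)) = fun n => x * (b (n + 1) * x ^ n) := by
    ext n
    ring
  exact hshift ▸ h.mul_left x

theorem powerSum_ode (ha : LeRadius a R) (hx : |x| < R) {A B C D E : ℝ}
    (hrec : ∀ n : ℕ,
      (A * n * (n - 1) - C * n + E) * a n + (B * n + D) * (n + 1) * a (n + 1) = 0) :
    (A * x ^ 2 + B * x) * powerSum (derivCoeff (derivCoeff a)) x
      - (C * x - D) * powerSum (derivCoeff a) x + E * powerSum a x = 0 := by
  -- `x f'`, `x f''`, `x² f''` have coefficients `n aₙ`, `n (n+1) aₙ₊₁`, `n (n-1) aₙ`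
  set F := powerSum a x
  set G := powerSum (derivCoeff a) x
  set H := powerSum (derivCoeff (derivCoeff a)) x
  have hF : HasSum (fun n => a n * x ^ n) F := (ha.summable hx).hasSum
  have hG : HasSum (fun n => derivCoeff a n * x ^ n) G :=
    ((leRadius_derivCoeff ha).summable hx).hasSum
  have hH : HasSum (fun n => derivCoeff (derivCoeff a) n * x ^ n) H :=
    ((leRadius_derivCoeff (leRadius_derivCoeff ha)).summable hx).hasSum
  have hxG : HasSum (fun n => n * a n * x ^ n) (x * G) := by
    simpa using hasSum_mul_pow_of_hasSum_succ (b := fun m : ℕ => (m : ℝ) * a m)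
      (by simpa [derivCoeff] using hG)
  have hxH : HasSum (fun n => n * derivCoeff a n * x ^ n) (x * H) := by
    simpa using hasSum_mul_pow_of_hasSum_succ (b := fun m : ℕ => (m : ℝ) * derivCoeff a m)
      (by simpa only [derivCoeff, Nat.cast_add, Nat.cast_one] using hH)
  have hxxH : HasSum (fun n => n * (n - 1) * a n * x ^ n) (x * (x * H)) := by
    simpa using hasSum_mul_pow_of_hasSum_succ (b := fun m : ℕ => (m : ℝ) * (m - 1) * a m)
      (by simpa [derivCoeff, mul_assoc, mul_left_comm] using hxH)
  have hzero := ((((hxxH.mul_left A).add (hxH.mul_left B)).sub (hxG.mul_left C)).add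
    (hG.mul_left D)).add (hF.mul_left E)
  rw [show (fun n => _) = fun _ => (0 : ℝ) from funext fun n => by
    simp only [derivCoeff]; linear_combination x ^ n * hrec n] at hzero
  linear_combination hzero.unique hasSum_zero

end PowerSeries

/-- `(-β/4 + ik)ₙ (-β/4 - ik)ₙ / ((γ/2)ₙ n!) · (-γ/β)ⁿ`, the coefficient of `xⁿ` in
`₂F₁(-β/4 + ik, -β/4 - ik; γ/2; -γx/β)`. -/
noncomputable def fsCoeff (γ β k : ℝ) (n : ℕ) : ℝ :=
  (∏ j ∈ Finset.range n, (((j : ℝ) - β / 4) ^ 2 + k ^ 2)) /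
    ((∏ j ∈ Finset.range n, (γ / 2 + (j : ℝ))) * (n.factorial : ℝ)) * (-γ / β) ^ n

section FisherSnedecor

variable {θ γ β k lam : ℝ}

theorem fsCoeff_succ (hγ : 0 < γ) (n : ℕ) :
    fsCoeff γ β k (n + 1) =
      (((n : ℝ) - β / 4) ^ 2 + k ^ 2) / ((γ / 2 + n) * (n + 1)) * (-γ / β) *
        fsCoeff γ β k n := by
  rw [fsCoeff, fsCoeff, Finset.prod_range_succ, Finset.prod_range_succ, Nat.factorial_succ,
    pow_succ (-γ / β) n]
  have hprod : ∏ j ∈ Finset.range n, (γ / 2 + (j : ℝ)) ≠ 0 :=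
    Finset.prod_ne_zero_iff.mpr fun j _ => by positivity
  generalize ∏ j ∈ Finset.range n, (((j : ℝ) - β / 4) ^ 2 + k ^ 2) = P
  push_cast
  field_simp

theorem tendsto_sub_sq_add_div_add_mul_add_one (b c d : ℝ) :
    Tendsto (fun n : ℕ => (((n : ℝ) - b) ^ 2 + c) / ((d + n) * (n + 1))) atTop (𝓝 1) := by
  have hε := tendsto_one_div_atTop_nhds_zero_nat (𝕜 := ℝ)
  have hnum := ((tendsto_const_nhds (x := (1 : ℝ))).sub (hε.const_mul b)).pow 2 |>.add
    ((hε.pow 2).const_mul c)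
  have hden := ((hε.const_mul d).add_const 1).mul ((tendsto_const_nhds (x := (1 : ℝ))).add hε)
  have h := hnum.div hden (by norm_num)
  simp only [mul_zero, sub_zero, add_zero, zero_add, one_pow, ne_eq, OfNat.ofNat_ne_zero,
    not_false_eq_true, zero_pow, mul_one, div_one] at h
  refine h.congr' ?_
  filter_upwards [eventually_ge_atTop 1] with n hn
  have hn : (n : ℝ) ≠ 0 := by positivity
  rw [Pi.div_apply]
  field_simp

theorem leRadius_fsCoeff (hγ : 0 < γ) (hβ : 0 < β) : LeRadius (fsCoeff γ β k) (β / γ) := by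
  have h := leRadius_of_tendsto_ratio (fsCoeff_succ hγ)
    ((tendsto_sub_sq_add_div_add_mul_add_one (β / 4) (k ^ 2) (γ / 2)).mul_const (-γ / β))
  rwa [one_mul, abs_div, abs_neg, abs_of_pos hγ, abs_of_pos hβ, inv_div] at h

theorem fsCoeff_recurrence (hθ : 0 < θ) (hγ : 0 < γ) (hβ : 2 < β)
    (hk : k ^ 2 = lam * (β - 2) / (2 * θ) - β ^ 2 / 16) (n : ℕ) :
    (2 * θ / (β - 2) * n * (n - 1) - θ * n + lam) * fsCoeff γ β k n
      + (2 * θ * β / (γ * (β - 2)) * n + θ * β / (β - 2)) * (n + 1) * fsCoeff γ β k (n + 1)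
      = 0 := by
  have hβ2 : β - 2 ≠ 0 := by linarith
  have hβ0 : β ≠ 0 := by linarith
  rw [fsCoeff_succ hγ, hk]
  field_simp
  ring

end FisherSnedecor

/-- The hypergeometric function `f₁(·, -λ)` solves the Sturm–Liouville
equation of the Fisher–Snedecor diffusion on `(0, β/γ)` for `λ` in the continuous part of
the spectrum. -/
theorem fs_hypergeometric_solves_sturm_liouville (θ γ β lam : ℝ)
    (hθ : 0 < θ) (hγ : 0 < γ) (hβ : 2 < β)
    (hlam : θ * β ^ 2 / (8 * (β - 2)) < lam)
    (k : ℝ) (hk : k = Real.sqrt (lam * (β - 2) / (2 * θ) - β ^ 2 / 16))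
    (f : ℝ → ℝ)
    (hf : f = fun x : ℝ => ∑' n : ℕ,
      (∏ j ∈ Finset.range n, (((j : ℝ) - β / 4) ^ 2 + k ^ 2)) /
        ((∏ j ∈ Finset.range n, (γ / 2 + (j : ℝ))) * (n.factorial : ℝ)) *
        (-γ * x / β) ^ n) :
    ∀ x ∈ Set.Ioo (0 : ℝ) (β / γ),
      DifferentiableAt ℝ f x ∧ DifferentiableAt ℝ (deriv f) x ∧
      (2 * θ / (γ * (β - 2))) * (x * (γ * x + β)) * deriv (deriv f) x
          - θ * (x - β / (β - 2)) * deriv f x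
        = -lam * f x := by
  rintro x ⟨hx0, hxR⟩
  have hf' : f = powerSum (fsCoeff γ β k) := by
    rw [hf]
    ext y
    refine tsum_congr fun n => ?_
    rw [fsCoeff, mul_assoc, ← mul_pow]
    ring
  have hk2 : k ^ 2 = lam * (β - 2) / (2 * θ) - β ^ 2 / 16 := by
    rw [hk, Real.sq_sqrt]
    rw [div_lt_iff₀ (by linarith)] at hlam
    rw [sub_nonneg, div_le_div_iff₀ (by norm_num) (by positivity)]
    nlinarith
  have ha := leRadius_fsCoeff (k := k) hγ (by linarith : 0 < β)
  have hx : |x| < β / γ := by rwa [abs_of_pos hx0]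
  have hderiv := deriv_powerSum_eventuallyEq ha hx
  have hderiv2 := hasDerivAt_powerSum (leRadius_derivCoeff ha) hx
  subst hf'
  refine ⟨(hasDerivAt_powerSum ha hx).differentiableAt,
    hderiv.differentiableAt_iff.mpr hderiv2.differentiableAt, ?_⟩
  rw [hderiv.deriv_eq, hderiv2.deriv, hderiv.eq_of_nhds]
  have hode := powerSum_ode ha hx (fsCoeff_recurrence hθ hγ hβ hk2)
  have hβ2 : β - 2 ≠ 0 := by linarith
  field_simp at hode ⊢
  linear_combination hode
end
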